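/- arXiv:1710.07406 — 5 statements merged into one kernel-verified Lean document; each statement's English description precedes it below -/
import Mathlib

section
/- Let f be C² with ‖∇²f(x)‖ ≤ L, 0 < α < 1/L, and g the proximal point map. At any strict saddle x* (∇f(x*) = 0, λ_min(∇²f(x*)) = λ < 0), x* is a fixed point of g and Dg(x*) = (I + α∇²f(x*))⁻¹ has an eigenvalue 1/(1+αλ) > 1. -/
/-!
Since `‖∇²f‖ ≤ L`, the gradient is `L`-Lipschitz, so at a critical point `x*` the function
satisfies the quadratic lower bound `f y ≥ f x* - (L/2)‖y - x*‖²`. Comparing the proximal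
objective at its minimiser `g x*` and at `x*` then gives `(1/(2α) - L/2)‖g x* - x*‖² ≤ 0`,
and `αL < 1` forces `g x* = x*`. The eigenvalue `λ` satisfies `|λ| ≤ ‖∇²f(x*)‖ ≤ L`, so
`0 < 1 + αλ < 1`.
-/

open scoped RealInnerProductSpace

theorem abs_le_of_apply_eq_smul {E : Type*} [NormedAddCommGroup E] [NormedSpace ℝ E]
    {T : E →L[ℝ] E} {L c : ℝ} {v : E} (hT : ‖T‖ ≤ L) (hv : v ≠ 0) (hTv : T v = c • v) :
    |c| ≤ L := by
  have hv0 : 0 < ‖v‖ := norm_pos_iff.mpr hv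
  have : |c| * ‖v‖ ≤ L * ‖v‖ := by
    calc |c| * ‖v‖ = ‖T v‖ := by rw [hTv, norm_smul, Real.norm_eq_abs]
      _ ≤ ‖T‖ * ‖v‖ := T.le_opNorm v
      _ ≤ L * ‖v‖ := by gcongr
  exact le_of_mul_le_mul_right this hv0

section Gradient

variable {E : Type*} [NormedAddCommGroup E] [InnerProductSpace ℝ E] [CompleteSpace E]
  {f : E → ℝ}

theorem ContDiff.gradient {n : WithTop ℕ∞} (hf : ContDiff ℝ (n + 1) f) :
    ContDiff ℝ n (gradient f) := by
  show ContDiff ℝ n fun x => (InnerProductSpace.toDual ℝ E).symm (fderiv ℝ f x)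
  exact (InnerProductSpace.toDual ℝ E).symm.contDiff.comp (hf.fderiv_right le_rfl)

theorem norm_gradient_sub_le_of_norm_fderiv_gradient_le (hf : Differentiable ℝ (gradient f))
    {L : ℝ} (hL : ∀ x, ‖fderiv ℝ (gradient f) x‖ ≤ L) (x y : E) :
    ‖gradient f y - gradient f x‖ ≤ L * ‖y - x‖ :=
  convex_univ.norm_image_sub_le_of_norm_fderiv_le (fun z _ => hf z) (fun z _ => hL z)
    (Set.mem_univ x) (Set.mem_univ y)

theorem le_add_inner_gradient_sub_sq_of_norm_gradient_sub_le (hf : Differentiable ℝ f)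
    {L : ℝ} {x : E} (hlip : ∀ y, ‖gradient f y - gradient f x‖ ≤ L * ‖y - x‖) (y : E) :
    f x + ⟪gradient f x, y - x⟫ - L / 2 * ‖y - x‖ ^ 2 ≤ f y := by
  set u := y - x
  -- `φ 1 - φ 0` is the claimed gap, and `φ' ≥ 0` by Cauchy–Schwarz and the Lipschitz bound.
  set φ : ℝ → ℝ := fun t => f (x + t • u) - t * ⟪gradient f x, u⟫ + L / 2 * t ^ 2 * ‖u‖ ^ 2
  have hφ' : ∀ t : ℝ, HasDerivAt φ
      (⟪gradient f (x + t • u) - gradient f x, u⟫ + L * t * ‖u‖ ^ 2) t := by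
    intro t
    have hline : HasDerivAt (fun t : ℝ => x + t • u) u t := by
      simpa using ((hasDerivAt_id t).smul_const u).const_add x
    have hcomp := (hf (x + t • u)).hasFDerivAt.comp_hasDerivAt t hline
    refine ((hcomp.sub ((hasDerivAt_id t).mul_const ⟪gradient f x, u⟫)).add
      (((hasDerivAt_pow 2 t).const_mul (L / 2)).mul_const (‖u‖ ^ 2))).congr_deriv ?_
    rw [← inner_gradient_left, inner_sub_left]
    push_cast
    ring
  have hφ'_nonneg : ∀ t, 0 ≤ t →
      0 ≤ ⟪gradient f (x + t • u) - gradient f x, u⟫ + L * t * ‖u‖ ^ 2 := by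
    intro t ht
    have hbound : ‖gradient f (x + t • u) - gradient f x‖ ≤ L * t * ‖u‖ := by
      simpa [norm_smul, abs_of_nonneg ht, mul_assoc] using hlip (x + t • u)
    have := (abs_le.mp (abs_real_inner_le_norm (gradient f (x + t • u) - gradient f x) u)).1
    nlinarith [mul_le_mul_of_nonneg_right hbound (norm_nonneg u)]
  have hmono : MonotoneOn φ (Set.Icc 0 1) :=
    monotoneOn_of_hasDerivWithinAt_nonneg (convex_Icc 0 1)
      (fun t _ => (hφ' t).continuousAt.continuousWithinAt)
      (fun t _ => (hφ' t).hasDerivWithinAt)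
      (fun t ht => hφ'_nonneg t (interior_subset ht).1)
  have h01 := hmono (Set.left_mem_Icc.mpr zero_le_one) (Set.right_mem_Icc.mpr zero_le_one)
    zero_le_one
  simp only [φ, zero_smul, add_zero, zero_mul, sub_zero, one_smul, one_mul, u,
    add_sub_cancel] at h01
  ring_nf at h01 ⊢
  linarith

end Gradient

theorem eq_of_isMinOn_prox_of_quadratic_lower_bound {E : Type*} [NormedAddCommGroup E]
    {f : E → ℝ} {L α : ℝ} {x p : E} (hα0 : 0 < α) (hαL : α * L < 1)
    (hlow : ∀ y, f x - L / 2 * ‖y - x‖ ^ 2 ≤ f y)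
    (hp : IsMinOn (fun z => f z + 1 / (2 * α) * ‖x - z‖ ^ 2) Set.univ p) : p = x := by
  have hcmp := isMinOn_iff.mp hp x (Set.mem_univ x)
  rw [sub_self, norm_zero, norm_sub_rev] at hcmp
  have hcoef : 0 < 1 / (2 * α) - L / 2 := by
    rw [sub_pos, div_lt_div_iff₀ two_pos (by positivity)]
    linarith
  have hsq : (1 / (2 * α) - L / 2) * ‖p - x‖ ^ 2 ≤ 0 := by
    nlinarith [hlow p]
  exact norm_sub_eq_zero_iff.mp ((sq_nonpos_iff _).mp (nonpos_of_mul_nonpos_right hsq hcoef))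

theorem stmt_9_general {d : ℕ} (f : EuclideanSpace ℝ (Fin d) → ℝ)
    (hf : ContDiff ℝ 2 f) (L α : ℝ)
    (hL : ∀ x, ‖fderiv ℝ (gradient f) x‖ ≤ L)
    (hα0 : 0 < α) (hα : α < 1 / L)
    (g : EuclideanSpace ℝ (Fin d) → EuclideanSpace ℝ (Fin d))
    (hg : ∀ x, IsMinOn (fun z => f z + (1 / (2 * α)) * ‖x - z‖ ^ 2) Set.univ (g x))
    (xs : EuclideanSpace ℝ (Fin d)) (hcrit : gradient f xs = 0)
    (lam : ℝ) (hlam : lam < 0)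
    (v : EuclideanSpace ℝ (Fin d)) (hv : v ≠ 0)
    (heig : fderiv ℝ (gradient f) xs v = lam • v) :
    g xs = xs ∧
      (ContinuousLinearMap.id ℝ (EuclideanSpace ℝ (Fin d)) + α • fderiv ℝ (gradient f) xs) v
        = (1 + α * lam) • v ∧
      1 < 1 / (1 + α * lam) := by
  have hlamL : -lam ≤ L := (neg_le_abs lam).trans (abs_le_of_apply_eq_smul (hL xs) hv heig)
  have hαL : α * L < 1 := by
    rwa [lt_div_iff₀ (by linarith)] at hα
  have hlow : ∀ y, f xs - L / 2 * ‖y - xs‖ ^ 2 ≤ f y := fun y => by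
    simpa [hcrit] using le_add_inner_gradient_sub_sq_of_norm_gradient_sub_le
      (hf.differentiable two_ne_zero) (norm_gradient_sub_le_of_norm_fderiv_gradient_le
        ((ContDiff.gradient (n := 1) hf).differentiable one_ne_zero) hL xs) y
  have hpos : 0 < 1 + α * lam := by nlinarith
  refine ⟨eq_of_isMinOn_prox_of_quadratic_lower_bound hα0 hαL hlow (hg xs), ?_, ?_⟩
  · simp [heig, add_smul, smul_smul]
  · exact one_lt_one_div hpos (by nlinarith)

theorem stmt_9 {d : ℕ} (f : EuclideanSpace ℝ (Fin d) → ℝ)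
    (hf : ContDiff ℝ 2 f) (L α : ℝ)
    (hL : ∀ x, ‖fderiv ℝ (gradient f) x‖ ≤ L)
    (hα0 : 0 < α) (hα : α < 1 / L)
    (g : EuclideanSpace ℝ (Fin d) → EuclideanSpace ℝ (Fin d))
    (hg : ∀ x, IsMinOn (fun z => f z + (1 / (2 * α)) * ‖x - z‖ ^ 2) Set.univ (g x))
    (xs : EuclideanSpace ℝ (Fin d)) (hcrit : gradient f xs = 0)
    (lam : ℝ) (hlam : lam < 0)
    (v : EuclideanSpace ℝ (Fin d)) (hv : v ≠ 0)
    (heig : fderiv ℝ (gradient f) xs v = lam • v)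
    (hmin : ∀ w : EuclideanSpace ℝ (Fin d), lam * ‖w‖ ^ 2 ≤ ⟪fderiv ℝ (gradient f) xs w, w⟫) :
    g xs = xs ∧
      (ContinuousLinearMap.id ℝ (EuclideanSpace ℝ (Fin d)) + α • fderiv ℝ (gradient f) xs) v
        = (1 + α * lam) • v ∧
      1 < 1 / (1 + α * lam) :=
  stmt_9_general f hf L α hL hα0 hα g hg xs hcrit lam hlam v hv heig
end

section
/- Let H be symmetric with ‖H_{S_i}‖ ≤ L_b for each block S_i (submatrix indexed by S_i), and 0 < α < 1/L_b. Then each matrix I − αP_{S_i}H has d − |S_i| eigenvalues equal to 1 and its remaining eigenvalues equal those of I_{S_i} − αH_{S_i,S_i}, which are all positive; hence the block coordinate descent Jacobian ∏_i(I − αP_{S_i}H) is invertible. -/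
/-! Ordering the coordinates as `S ⊕ Sᶜ` turns `1 - P_S M` into the block upper-triangular
matrix `[[1 - M_SS, -M_SSᶜ], [0, 1]]`, which gives its characteristic polynomial and its
determinant. Extending vectors on `S` by zero, the bound on the quadratic form of `H` yields
`v ⬝ (1 - α H_SS) v ≥ (1 - α L_b) (v ⬝ v) > 0` for `v ≠ 0`, so `1 - α H_SS` has neither a
nonpositive real eigenvalue nor a kernel, and every factor of the product is invertible. -/

open Matrix Polynomial

namespace Matrix

section Extension

variable {m n R : Type*} [Fintype m] [Fintype n] [NonUnitalNonAssocSemiring R]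
  {f : m → n}

theorem extend_zero_dotProduct (hf : Function.Injective f) (v : m → R) (w : n → R) :
    Function.extend f v 0 ⬝ᵥ w = v ⬝ᵥ (w ∘ f) :=
  (Fintype.sum_of_injective f hf _ _
    (fun j hj => by simp [Function.extend_apply' _ _ _ (by simpa using hj)])
    (fun k => by simp [hf.extend_apply])).symm

theorem dotProduct_extend_zero (hf : Function.Injective f) (w : n → R) (v : m → R) :
    w ⬝ᵥ Function.extend f v 0 = (w ∘ f) ⬝ᵥ v :=
  (Fintype.sum_of_injective f hf _ _
    (fun j hj => by simp [Function.extend_apply' _ _ _ (by simpa using hj)])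
    (fun k => by simp [hf.extend_apply])).symm

theorem extend_zero_dotProduct_extend_zero (hf : Function.Injective f) (v : m → R) :
    Function.extend f v 0 ⬝ᵥ Function.extend f v 0 = v ⬝ᵥ v := by
  rw [extend_zero_dotProduct hf, Function.extend_comp hf]

theorem extend_zero_dotProduct_mulVec_extend_zero (hf : Function.Injective f)
    (M : Matrix n n R) (v : m → R) :
    Function.extend f v 0 ⬝ᵥ (M *ᵥ Function.extend f v 0) =
      v ⬝ᵥ (M.submatrix f f *ᵥ v) := by
  rw [extend_zero_dotProduct hf]
  congr 1
  ext k
  exact dotProduct_extend_zero hf _ v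

end Extension

theorem abs_dotProduct_mulVec_submatrix_le {n R : Type*} [Fintype n] [CommRing R] [LinearOrder R]
    {T : Finset n} {M : Matrix n n R} {L : R}
    (hM : ∀ w : n → R, (∀ j, j ∉ T → w j = 0) → |w ⬝ᵥ (M *ᵥ w)| ≤ L * (w ⬝ᵥ w))
    (v : T → R) :
    |v ⬝ᵥ (M.submatrix (↑) (↑) *ᵥ v)| ≤ L * (v ⬝ᵥ v) := by
  have hsupp : ∀ j, j ∉ T → Function.extend Subtype.val v 0 j = 0 := fun j hj =>
    Function.extend_apply' _ _ _ fun ⟨k, hk⟩ => hj (hk ▸ k.2)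
  simpa [extend_zero_dotProduct_mulVec_extend_zero Subtype.val_injective,
    extend_zero_dotProduct_extend_zero Subtype.val_injective] using hM _ hsupp

section Coercive

variable {n R : Type*} [Fintype n] [CommRing R] [LinearOrder R] [IsStrictOrderedRing R]
  {A : Matrix n n R}

theorem dotProduct_self_pos {v : n → R} (hv : v ≠ 0) : 0 < v ⬝ᵥ v :=
  (Finset.sum_nonneg fun i _ => mul_self_nonneg (v i)).lt_of_ne
    (Ne.symm (dotProduct_self_eq_zero.not.mpr hv))

variable [DecidableEq n]

theorem det_ne_zero_of_forall_dotProduct_mulVec_pos (hA : ∀ v ≠ 0, 0 < v ⬝ᵥ (A *ᵥ v)) :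
    A.det ≠ 0 := by
  intro hdet
  obtain ⟨v, hv, hAv⟩ := exists_mulVec_eq_zero_iff.mpr hdet
  simpa [hAv] using hA v hv

theorem pos_of_isRoot_charpoly_of_forall_dotProduct_mulVec_pos
    (hA : ∀ v ≠ 0, 0 < v ⬝ᵥ (A *ᵥ v)) {μ : R} (hμ : A.charpoly.IsRoot μ) : 0 < μ := by
  rw [IsRoot, eval_charpoly] at hμ
  obtain ⟨v, hv, hμv⟩ := exists_mulVec_eq_zero_iff.mpr hμ
  have hAv : A *ᵥ v = μ • v := by
    rw [sub_mulVec, sub_eq_zero] at hμv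
    rw [← hμv]
    ext i
    simp [mulVec_diagonal]
  have := hA v hv
  rw [hAv, dotProduct_smul, smul_eq_mul] at this
  exact pos_of_mul_pos_left this (dotProduct_self_pos hv).le

theorem dotProduct_one_sub_smul_mulVec_pos {B : Matrix n n R} {L α : R}
    (hB : ∀ v, |v ⬝ᵥ (B *ᵥ v)| ≤ L * (v ⬝ᵥ v)) (hα : 0 < α) (hαL : α * L < 1)
    {v : n → R} (hv : v ≠ 0) : 0 < v ⬝ᵥ ((1 - α • B) *ᵥ v) := by
  have hvv := dotProduct_self_pos hv
  have hvBv := (abs_le.mp (hB v)).2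
  rw [sub_mulVec, one_mulVec, smul_mulVec, dotProduct_sub, dotProduct_smul, smul_eq_mul]
  nlinarith

end Coercive

section Projection

variable {n R : Type*} [Fintype n] [DecidableEq n] [CommRing R] (T : Finset n) (M : Matrix n n R)

theorem sum_single_one_mul_apply (k j : n) :
    ((∑ l ∈ T, single l l (1 : R)) * M) k j = if k ∈ T then M k j else 0 := by
  rw [Finset.sum_mul, Matrix.sum_apply]
  split_ifs with hk
  · rw [Finset.sum_eq_single_of_mem k hk fun l _ hl => single_mul_apply_of_ne _ _ _ _ _ hl.symm _,
      single_mul_apply_same, one_mul]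
  · exact Finset.sum_eq_zero fun l hl =>
      single_mul_apply_of_ne _ _ _ _ _ (ne_of_mem_of_not_mem hl hk).symm _

theorem reindex_one_sub_sum_single_mul :
    reindex (Equiv.sumCompl (· ∈ T)).symm (Equiv.sumCompl (· ∈ T)).symm
        (1 - (∑ l ∈ T, single l l (1 : R)) * M) =
      fromBlocks (1 - M.submatrix (↑) (↑)) (-M.submatrix (↑) (↑)) 0 1 := by
  ext (k | k) (j | j)
  · simp [sum_single_one_mul_apply, k.2, one_apply]
  · simp [sum_single_one_mul_apply, k.2, one_apply_ne (ne_of_mem_of_not_mem k.2 j.2)]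
  · simp [sum_single_one_mul_apply, k.2, one_apply_ne (ne_of_mem_of_not_mem j.2 k.2).symm]
  · simp [sum_single_one_mul_apply, k.2, one_apply, Subtype.val_inj]

theorem charpoly_one_sub_sum_single_mul :
    (1 - (∑ l ∈ T, single l l (1 : R)) * M).charpoly =
      (X - 1) ^ (Fintype.card n - T.card) *
        (1 - M.submatrix (↑) (↑) : Matrix T T R).charpoly := by
  rw [← charpoly_reindex (Equiv.sumCompl (· ∈ T)).symm, reindex_one_sub_sum_single_mul,
    charpoly_fromBlocks_zero₂₁, charpoly_one, Fintype.card_subtype_compl, Fintype.card_coe,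
    mul_comm]

theorem det_one_sub_sum_single_mul :
    (1 - (∑ l ∈ T, single l l (1 : R)) * M).det =
      (1 - M.submatrix (↑) (↑) : Matrix T T R).det := by
  rw [← det_reindex_self (Equiv.sumCompl (· ∈ T)).symm, reindex_one_sub_sum_single_mul,
    det_fromBlocks_zero₂₁, det_one, mul_one]

end Projection

end Matrix

theorem stmt_14_general {d b : ℕ} (H : Matrix (Fin d) (Fin d) ℝ)
    (Lb α : ℝ) (S : Fin b → Finset (Fin d))
    (hLb : ∀ i : Fin b, ∀ v : Fin d → ℝ, (∀ j, j ∉ S i → v j = 0) →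
      abs (v ⬝ᵥ (H *ᵥ v)) ≤ Lb * (v ⬝ᵥ v))
    (hα0 : 0 < α) (hα : α < 1 / Lb)
    (P : Finset (Fin d) → Matrix (Fin d) (Fin d) ℝ)
    (hP : ∀ T, P T = ∑ l ∈ T, Matrix.single l l 1) :
    (∀ i : Fin b,
      ((1 : Matrix (Fin d) (Fin d) ℝ) - α • (P (S i) * H)).charpoly
        = (X - 1) ^ (d - (S i).card) *
          ((1 : Matrix (S i) (S i) ℝ)
            - α • H.submatrix (fun a : S i => (a : Fin d)) (fun a : S i => (a : Fin d))).charpoly) ∧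
    (∀ i : Fin b, ∀ μ : ℝ,
      (((1 : Matrix (S i) (S i) ℝ)
        - α • H.submatrix (fun a : S i => (a : Fin d)) (fun a : S i => (a : Fin d))).charpoly).IsRoot μ
        → 0 < μ) ∧
    IsUnit ((List.ofFn fun i : Fin b =>
      (1 : Matrix (Fin d) (Fin d) ℝ) - α • (P (S i.rev) * H)).prod) := by
  have hLb_pos : 0 < Lb := by
    by_contra! h
    linarith [one_div_nonpos.mpr h]
  have hαLb : α * Lb < 1 := (lt_div_iff₀ hLb_pos).mp (one_div Lb ▸ hα)
  have hPH : ∀ T, α • (P T * H) = (∑ l ∈ T, single l l 1) * (α • H) := fun T => by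
    rw [hP, Matrix.mul_smul]
  have hpos : ∀ i, ∀ v ≠ 0, 0 < v ⬝ᵥ ((1 - α • H.submatrix ((↑) : S i → Fin d) (↑)) *ᵥ v) :=
    fun i v => dotProduct_one_sub_smul_mulVec_pos (abs_dotProduct_mulVec_submatrix_le (hLb i))
      hα0 hαLb
  refine ⟨fun i => ?_, fun i μ => pos_of_isRoot_charpoly_of_forall_dotProduct_mulVec_pos (hpos i),
    List.prod_isUnit fun A hA => ?_⟩
  · rw [hPH, charpoly_one_sub_sum_single_mul, Fintype.card_fin]
    rfl
  · obtain ⟨i, rfl⟩ := List.mem_ofFn.mp hA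
    rw [isUnit_iff_isUnit_det, hPH, det_one_sub_sum_single_mul, isUnit_iff_ne_zero]
    exact det_ne_zero_of_forall_dotProduct_mulVec_pos (hpos i.rev)

theorem stmt_14 {d b : ℕ} (H : Matrix (Fin d) (Fin d) ℝ) (hH : H.IsSymm)
    (Lb α : ℝ) (S : Fin b → Finset (Fin d))
    (hdisj : ∀ i j, i ≠ j → Disjoint (S i) (S j))
    (hcover : ∀ l : Fin d, ∃ i, l ∈ S i)
    (hLb : ∀ i : Fin b, ∀ v : Fin d → ℝ, (∀ j, j ∉ S i → v j = 0) →
      abs (v ⬝ᵥ (H *ᵥ v)) ≤ Lb * (v ⬝ᵥ v))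
    (hα0 : 0 < α) (hα : α < 1 / Lb)
    (P : Finset (Fin d) → Matrix (Fin d) (Fin d) ℝ)
    (hP : ∀ T, P T = ∑ l ∈ T, Matrix.single l l 1) :
    (∀ i : Fin b,
      ((1 : Matrix (Fin d) (Fin d) ℝ) - α • (P (S i) * H)).charpoly
        = (X - 1) ^ (d - (S i).card) *
          ((1 : Matrix (S i) (S i) ℝ)
            - α • H.submatrix (fun a : S i => (a : Fin d)) (fun a : S i => (a : Fin d))).charpoly) ∧
    (∀ i : Fin b, ∀ μ : ℝ,
      (((1 : Matrix (S i) (S i) ℝ)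
        - α • H.submatrix (fun a : S i => (a : Fin d)) (fun a : S i => (a : Fin d))).charpoly).IsRoot μ
        → 0 < μ) ∧
    IsUnit ((List.ofFn fun i : Fin b =>
      (1 : Matrix (Fin d) (Fin d) ℝ) - α • (P (S i.rev) * H)).prod) :=
  stmt_14_general H Lb α S hLb hα0 hα P hP
end

section
/- Let H be symmetric with ‖H‖ ≤ L_b on each block, z₁ ∈ ℝ^d, and z_{i+1} = (I − αP_{S_i}H)z_i with 0 < α < 1/L_b. Then z_{i+1}ᵀHz_{i+1} ≤ z_iᵀHz_i − α(2 − αL_b)‖P_{S_i}Hz_i‖² ≤ z_iᵀHz_i − α‖P_{S_i}Hz_i‖²; in particular z_iᵀHz_i is non-increasing. -/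
/-!
With `p = P_S H z` the step is `z' = z - α p`. Since `H` is symmetric,
`z'ᵀ H z' = zᵀ H z - 2α pᵀ H z + α² pᵀ H p`. As `P_S` is an orthogonal coordinate projector,
`pᵀ H z = ‖p‖²`, and as `p` is supported on `S`, the block bound gives `pᵀ H p ≤ L_b ‖p‖²`.
The condition `0 < α < 1 / L_b` forces `L_b > 0` and `α L_b < 1`, so `2 - α L_b ≥ 1`.
-/

open Matrix

namespace Matrix

variable {n R : Type*} [Fintype n]

lemma sum_single_one_mulVec_apply [DecidableEq n] [NonAssocSemiring R]
    (T : Finset n) (w : n → R) (j : n) :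
    ((∑ l ∈ T, single l l (1 : R)) *ᵥ w) j = if j ∈ T then w j else 0 := by
  simp [sum_mulVec, Finset.sum_apply, single_mulVec, Function.update_apply]

lemma sum_single_one_mulVec_dotProduct_self [DecidableEq n] [NonAssocSemiring R]
    (T : Finset n) (w : n → R) :
    (∑ l ∈ T, single l l (1 : R)) *ᵥ w ⬝ᵥ w
      = (∑ l ∈ T, single l l (1 : R)) *ᵥ w ⬝ᵥ (∑ l ∈ T, single l l (1 : R)) *ᵥ w := by
  simp only [dotProduct, sum_single_one_mulVec_apply]
  refine Finset.sum_congr rfl fun j _ => ?_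
  split_ifs <;> simp

lemma IsSymm.dotProduct_mulVec_sub_smul [CommRing R] {H : Matrix n n R} (hH : H.IsSymm)
    (z p : n → R) (a : R) :
    (z - a • p) ⬝ᵥ (H *ᵥ (z - a • p))
      = z ⬝ᵥ (H *ᵥ z) - 2 * a * (p ⬝ᵥ (H *ᵥ z)) + a ^ 2 * (p ⬝ᵥ (H *ᵥ p)) := by
  have hswap : z ⬝ᵥ (H *ᵥ p) = p ⬝ᵥ (H *ᵥ z) := by
    rw [dotProduct_mulVec, ← mulVec_transpose, hH.eq, dotProduct_comm]
  simp only [mulVec_sub, mulVec_smul, sub_dotProduct, dotProduct_sub, smul_dotProduct,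
    dotProduct_smul, smul_eq_mul, hswap]
  ring

lemma IsSymm.dotProduct_mulVec_sub_smul_le [CommRing R] [LinearOrder R] [IsStrictOrderedRing R]
    {H : Matrix n n R} (hH : H.IsSymm) {z p : n → R} {a L : R} (hpz : p ⬝ᵥ (H *ᵥ z) = p ⬝ᵥ p)
    (hpp : p ⬝ᵥ (H *ᵥ p) ≤ L * (p ⬝ᵥ p)) :
    (z - a • p) ⬝ᵥ (H *ᵥ (z - a • p)) ≤ z ⬝ᵥ (H *ᵥ z) - a * (2 - a * L) * (p ⬝ᵥ p) := by
  rw [hH.dotProduct_mulVec_sub_smul, hpz]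
  nlinarith [mul_le_mul_of_nonneg_left hpp (sq_nonneg a)]

end Matrix

theorem stmt_15_general {d b : ℕ} (H : Matrix (Fin d) (Fin d) ℝ) (hH : H.IsSymm)
    (Lb α : ℝ) (S : Fin b → Finset (Fin d))
    (hLb : ∀ i : Fin b, ∀ v : Fin d → ℝ, (∀ j, j ∉ S i → v j = 0) →
      abs (v ⬝ᵥ (H *ᵥ v)) ≤ Lb * (v ⬝ᵥ v))
    (hα0 : 0 < α) (hα : α < 1 / Lb)
    (P : Finset (Fin d) → Matrix (Fin d) (Fin d) ℝ)
    (hP : ∀ T, P T = ∑ l ∈ T, Matrix.single l l 1)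
    (z : ℕ → (Fin d → ℝ))
    (hz : ∀ i : Fin b, z ((i : ℕ) + 1)
      = ((1 : Matrix (Fin d) (Fin d) ℝ) - α • (P (S i) * H)) *ᵥ z i) :
    ∀ i : Fin b,
      z ((i : ℕ) + 1) ⬝ᵥ (H *ᵥ z ((i : ℕ) + 1))
          ≤ z i ⬝ᵥ (H *ᵥ z i)
            - α * (2 - α * Lb) * ((P (S i) *ᵥ (H *ᵥ z i)) ⬝ᵥ (P (S i) *ᵥ (H *ᵥ z i))) ∧
      z i ⬝ᵥ (H *ᵥ z i)
          - α * (2 - α * Lb) * ((P (S i) *ᵥ (H *ᵥ z i)) ⬝ᵥ (P (S i) *ᵥ (H *ᵥ z i)))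
        ≤ z i ⬝ᵥ (H *ᵥ z i)
            - α * ((P (S i) *ᵥ (H *ᵥ z i)) ⬝ᵥ (P (S i) *ᵥ (H *ᵥ z i))) ∧
      z ((i : ℕ) + 1) ⬝ᵥ (H *ᵥ z ((i : ℕ) + 1)) ≤ z i ⬝ᵥ (H *ᵥ z i) := by
  intro i
  set p := P (S i) *ᵥ (H *ᵥ z i)
  have hLb_pos : 0 < Lb := one_div_pos.mp (hα0.trans hα)
  have hαLb : α * Lb < 1 := (lt_div_iff₀ hLb_pos).mp hα
  have hstep : z ((i : ℕ) + 1) = z i - α • p := by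
    rw [hz i, sub_mulVec, one_mulVec, smul_mulVec, ← mulVec_mulVec]
  have hpz : p ⬝ᵥ (H *ᵥ z i) = p ⬝ᵥ p := by
    simp only [p, hP, sum_single_one_mulVec_dotProduct_self]
  have hpp : p ⬝ᵥ (H *ᵥ p) ≤ Lb * (p ⬝ᵥ p) :=
    (le_abs_self _).trans <| hLb i p fun j hj => by
      simp only [p, hP, sum_single_one_mulVec_apply, if_neg hj]
  have hdecrease := hH.dotProduct_mulVec_sub_smul_le (a := α) hpz hpp
  have hp_nonneg : 0 ≤ p ⬝ᵥ p := Finset.sum_nonneg fun j _ => mul_self_nonneg (p j)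
  rw [hstep]
  refine ⟨hdecrease, ?_, ?_⟩ <;> nlinarith [mul_nonneg hα0.le hp_nonneg]

theorem stmt_15 {d b : ℕ} (H : Matrix (Fin d) (Fin d) ℝ) (hH : H.IsSymm)
    (Lb α : ℝ) (S : Fin b → Finset (Fin d))
    (hdisj : ∀ i j, i ≠ j → Disjoint (S i) (S j))
    (hcover : ∀ l : Fin d, ∃ i, l ∈ S i)
    (hLb : ∀ i : Fin b, ∀ v : Fin d → ℝ, (∀ j, j ∉ S i → v j = 0) →
      abs (v ⬝ᵥ (H *ᵥ v)) ≤ Lb * (v ⬝ᵥ v))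
    (hα0 : 0 < α) (hα : α < 1 / Lb)
    (P : Finset (Fin d) → Matrix (Fin d) (Fin d) ℝ)
    (hP : ∀ T, P T = ∑ l ∈ T, Matrix.single l l 1)
    (z : ℕ → (Fin d → ℝ))
    (hz : ∀ i : Fin b, z ((i : ℕ) + 1)
      = ((1 : Matrix (Fin d) (Fin d) ℝ) - α • (P (S i) * H)) *ᵥ z i) :
    ∀ i : Fin b,
      z ((i : ℕ) + 1) ⬝ᵥ (H *ᵥ z ((i : ℕ) + 1))
          ≤ z i ⬝ᵥ (H *ᵥ z i)
            - α * (2 - α * Lb) * ((P (S i) *ᵥ (H *ᵥ z i)) ⬝ᵥ (P (S i) *ᵥ (H *ᵥ z i))) ∧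
      z i ⬝ᵥ (H *ᵥ z i)
          - α * (2 - α * Lb) * ((P (S i) *ᵥ (H *ᵥ z i)) ⬝ᵥ (P (S i) *ᵥ (H *ᵥ z i)))
        ≤ z i ⬝ᵥ (H *ᵥ z i)
            - α * ((P (S i) *ᵥ (H *ᵥ z i)) ⬝ᵥ (P (S i) *ᵥ (H *ᵥ z i))) ∧
      z ((i : ℕ) + 1) ⬝ᵥ (H *ᵥ z ((i : ℕ) + 1)) ≤ z i ⬝ᵥ (H *ᵥ z i) :=
  stmt_15_general H hH Lb α S hLb hα0 hα P hP z hz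
end

section
/- Let A be a symmetric positive definite matrix and H a symmetric matrix with a negative eigenvalue. Then for any α > 0, the matrix I − αA⁻¹H has an eigenvalue strictly greater than 1. -/
/-!
Write `A = Bᴴ B` with `B` invertible. Then `A⁻¹ H = B⁻¹ M B` for the Hermitian matrix
`M = B⁻ᴴ H B⁻¹`, so `A⁻¹ H` has the (real) spectrum of `M`. Since `M` is congruent to `H`, it is
positive semidefinite exactly when `H` is; a negative eigenvalue `λ` of `H` therefore gives a
negative eigenvalue `c` of `A⁻¹ H`, and `1 - α c > 1` is an eigenvalue of `1 - α A⁻¹ H`.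
-/

open Matrix
open scoped MatrixOrder ComplexOrder

namespace Matrix

variable {𝕜 n : Type*} [RCLike 𝕜] [Fintype n] [DecidableEq n]

theorem PosDef.exists_isUnit_eq_conjTranspose_mul_self {A : Matrix n n 𝕜} (hA : A.PosDef) :
    ∃ B : Matrix n n 𝕜, IsUnit B ∧ A = Bᴴ * B :=
  CStarAlgebra.isStrictlyPositive_iff_eq_star_mul_self.mp hA.isStrictlyPositive

theorem IsHermitian.exists_eigenvector_neg_of_not_posSemidef {M : Matrix n n 𝕜}
    (hM : M.IsHermitian) (h : ¬ M.PosSemidef) :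
    ∃ c : ℝ, c < 0 ∧ ∃ u : n → 𝕜, u ≠ 0 ∧ M *ᵥ u = c • u := by
  rw [hM.posSemidef_iff_eigenvalues_nonneg, Pi.le_def, not_forall] at h
  obtain ⟨i, hi⟩ := h
  exact ⟨_, not_le.mp hi, _,
    (WithLp.ofLp_eq_zero (p := 2)).not.mpr (hM.eigenvectorBasis.orthonormal.ne_zero i),
    hM.mulVec_eigenvectorBasis i⟩

theorem PosDef.exists_eigenvector_inv_mul_neg_of_not_posSemidef {A H : Matrix n n 𝕜}
    (hA : A.PosDef) (hH : H.IsHermitian) (h : ¬ H.PosSemidef) :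
    ∃ c : ℝ, c < 0 ∧ ∃ w : n → 𝕜, w ≠ 0 ∧ (A⁻¹ * H) *ᵥ w = c • w := by
  obtain ⟨B, hB, rfl⟩ := hA.exists_isUnit_eq_conjTranspose_mul_self
  have hBdet : IsUnit B.det := (isUnit_iff_isUnit_det B).mp hB
  have hBHdet : IsUnit Bᴴ.det := by
    rw [det_conjTranspose]
    exact hBdet.star
  set M := (B⁻¹)ᴴ * H * B⁻¹
  have hM_not_psd : ¬ M.PosSemidef := fun hM_psd ↦ h <| by
    simpa only [M, conjTranspose_nonsing_inv, mul_assoc, nonsing_inv_mul _ hBdet, mul_one,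
      mul_nonsing_inv_cancel_left (h := hBHdet)] using hM_psd.conjTranspose_mul_mul_same B
  obtain ⟨c, hc, u, hu, hMu⟩ :=
    (isHermitian_conjTranspose_mul_mul _ hH).exists_eigenvector_neg_of_not_posSemidef hM_not_psd
  have hsimilar : (Bᴴ * B)⁻¹ * H * B⁻¹ = B⁻¹ * M := by
    simp only [M, mul_inv_rev, conjTranspose_nonsing_inv, mul_assoc]
  refine ⟨c, hc, B⁻¹ *ᵥ u, ?_, ?_⟩
  · simpa only [mulVec_zero] using
      (mulVec_injective_iff_isUnit.2 (isUnit_nonsing_inv_iff.2 hB)).ne hu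
  · rw [mulVec_mulVec, hsimilar, ← mulVec_mulVec, hMu, mulVec_smul]

end Matrix

theorem stmt_17 {d : ℕ} (A H : Matrix (Fin d) (Fin d) ℝ)
    (hA : A.PosDef) (hH : H.IsSymm)
    (lam : ℝ) (hlam : lam < 0) (v : Fin d → ℝ) (hv : v ≠ 0)
    (heig : H *ᵥ v = lam • v)
    (α : ℝ) (hα : 0 < α) :
    ∃ μ : ℝ, 1 < μ ∧ ∃ w : Fin d → ℝ, w ≠ 0 ∧
      ((1 : Matrix (Fin d) (Fin d) ℝ) - α • (A⁻¹ * H)) *ᵥ w = μ • w := by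
  have hH_not_psd : ¬ H.PosSemidef := fun hH_psd ↦ by
    have hquad := hH_psd.dotProduct_mulVec_nonneg v
    rw [heig, dotProduct_smul, smul_eq_mul] at hquad
    nlinarith [dotProduct_star_self_pos_iff.2 hv]
  obtain ⟨c, hc, w, hw, hAHw⟩ :=
    hA.exists_eigenvector_inv_mul_neg_of_not_posSemidef (isHermitian_iff_isSymm.2 hH) hH_not_psd
  refine ⟨1 - α * c, by nlinarith, w, hw, ?_⟩
  rw [sub_mulVec, one_mulVec, smul_mulVec, hAHw, smul_smul, sub_smul, one_smul]
end

section
/- Let g : ℝ^d → ℝ^d be C¹ with det(Dg(x)) ≠ 0 for all x, and suppose every point of a set A of fixed points of g has an open neighborhood B such that ∩_{k≥0} g^{−k}(B) has Lebesgue measure zero. Then the set W = {x₀ : the sequence g^k(x₀) converges to a point of A} has Lebesgue measure zero, provided A can be covered by countably many such neighborhoods. -/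
/-!
An orbit converging to a point of `A` is eventually trapped in one of the open sets `B n`, so
every point of `W` is mapped by some iterate `g^[j]` into the null set `⋂ k, g^[k] ⁻¹' B n`.
A `C¹` map with invertible derivative is locally injective, hence by the change of variables
formula its preimages (and those of its iterates) of null sets are null. This makes `W` a
countable union of null sets.
-/

open MeasureTheory Filter Set

theorem HasStrictFDerivAt.exists_isOpen_mem_injOn {𝕜 E F : Type*} [NontriviallyNormedField 𝕜]
    [NormedAddCommGroup E] [NormedSpace 𝕜 E] [CompleteSpace E]
    [NormedAddCommGroup F] [NormedSpace 𝕜 F] [CompleteSpace F]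
    {f : E → F} {f' : E ≃L[𝕜] F} {a : E} (hf : HasStrictFDerivAt f (f' : E →L[𝕜] F) a) :
    ∃ U, IsOpen U ∧ a ∈ U ∧ InjOn f U := by
  refine ⟨_, (hf.toOpenPartialHomeomorph f).open_source,
    hf.mem_toOpenPartialHomeomorph_source, ?_⟩
  simpa only [hf.toOpenPartialHomeomorph_coe] using (hf.toOpenPartialHomeomorph f).injOn

section AddHaar

variable {E : Type*} [NormedAddCommGroup E] [NormedSpace ℝ E] [FiniteDimensional ℝ E]
  [MeasurableSpace E] [BorelSpace E] (μ : Measure E) [μ.IsAddHaarMeasure]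

theorem addHaar_eq_zero_of_addHaar_image_eq_zero {f : E → E} {f' : E → E →L[ℝ] E}
    {s : Set E} (hs : MeasurableSet s) (hf' : ∀ x ∈ s, HasFDerivWithinAt f (f' x) s x)
    (hf : InjOn f s)
    (hdet : ∀ x ∈ s, (f' x).det ≠ 0) (himage : μ (f '' s) = 0) : μ s = 0 := by
  rw [← lintegral_abs_det_fderiv_eq_addHaar_image μ hs hf' hf,
    setLIntegral_eq_zero_iff' hs (aemeasurable_ofReal_abs_det_fderivWithin μ hs hf')] at himage
  refine measure_eq_zero_iff_ae_notMem.2 (himage.mono fun x hx hxs => ?_)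
  simpa [hdet x hxs] using hx hxs

theorem quasiMeasurePreserving_of_hasStrictFDerivAt_of_det_ne_zero {f : E → E}
    {f' : E → E →L[ℝ] E} (hf' : ∀ x, HasStrictFDerivAt f (f' x) x)
    (hdet : ∀ x, (f' x).det ≠ 0) : Measure.QuasiMeasurePreserving f μ μ := by
  have hmeas : Measurable f :=
    (continuous_iff_continuousAt.2 fun x => (hf' x).continuousAt).measurable
  have hinj : ∀ x, ∃ U, IsOpen U ∧ x ∈ U ∧ InjOn f U := fun x => by
    have hx := hf' x
    rw [← (f' x).coe_toContinuousLinearEquivOfDetNeZero (hdet x)] at hx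
    exact hx.exists_isOpen_mem_injOn
  choose U hUopen hxU hUinj using hinj
  obtain ⟨t, htc, htU⟩ :=
    TopologicalSpace.countable_cover_nhds fun x => (hUopen x).mem_nhds (hxU x)
  refine ⟨hmeas, Measure.AbsolutelyContinuous.mk fun s hs hμs => ?_⟩
  rw [Measure.map_apply hmeas hs]
  have hcover : f ⁻¹' s ⊆ ⋃ x ∈ t, f ⁻¹' s ∩ U x := fun y hy => by
    obtain ⟨x, hx, hyx⟩ := mem_iUnion₂.1 (htU.symm ▸ mem_univ y)
    exact mem_iUnion₂.2 ⟨x, hx, hy, hyx⟩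
  refine measure_mono_null hcover ((measure_biUnion_null_iff htc).2 fun x _ => ?_)
  exact addHaar_eq_zero_of_addHaar_image_eq_zero μ
    ((hs.preimage hmeas).inter (hUopen x).measurableSet)
    (fun y _ => (hf' y).hasFDerivAt.hasFDerivWithinAt) ((hUinj x).mono inter_subset_right)
    (fun y _ => hdet y) (measure_mono_null (image_subset_iff.2 inter_subset_left) hμs)

end AddHaar

theorem Filter.Tendsto.exists_iterate_mem_iInter_preimage_iterate {X : Type*}
    [TopologicalSpace X] {f : X → X} {x a : X} {U : Set X}
    (hx : Tendsto (fun k => f^[k] x) atTop (nhds a))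
    (hU : U ∈ nhds a) : ∃ j, f^[j] x ∈ ⋂ k, f^[k] ⁻¹' U := by
  obtain ⟨j, hj⟩ := eventually_atTop.1 (hx.eventually_mem hU)
  refine ⟨j, mem_iInter.2 fun k => ?_⟩
  rw [mem_preimage, ← Function.iterate_add_apply]
  exact hj (k + j) (Nat.le_add_left j k)

theorem stmt_18_general {d : ℕ} (g : EuclideanSpace ℝ (Fin d) → EuclideanSpace ℝ (Fin d))
    (hg : ContDiff ℝ 1 g)
    (hdet : ∀ x, (fderiv ℝ g x).det ≠ 0)
    (A : Set (EuclideanSpace ℝ (Fin d)))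
    (B : ℕ → Set (EuclideanSpace ℝ (Fin d)))
    (hBopen : ∀ n, IsOpen (B n))
    (hcover : A ⊆ ⋃ n, B n)
    (hnull : ∀ n, volume (⋂ k : ℕ, g^[k] ⁻¹' (B n)) = 0) :
    volume {x₀ | ∃ a ∈ A, Tendsto (fun k => g^[k] x₀) atTop (nhds a)} = 0 := by
  have hqmp : Measure.QuasiMeasurePreserving g volume volume :=
    quasiMeasurePreserving_of_hasStrictFDerivAt_of_det_ne_zero volume
      (fun x => hg.contDiffAt.hasStrictFDerivAt one_ne_zero) hdet
  have htrapped : {x₀ | ∃ a ∈ A, Tendsto (fun k => g^[k] x₀) atTop (nhds a)}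
      ⊆ ⋃ n, ⋃ j, g^[j] ⁻¹' ⋂ k, g^[k] ⁻¹' B n := by
    rintro x ⟨a, ha, hx⟩
    obtain ⟨n, hn⟩ := mem_iUnion.1 (hcover ha)
    obtain ⟨j, hj⟩ := hx.exists_iterate_mem_iInter_preimage_iterate ((hBopen n).mem_nhds hn)
    exact mem_iUnion₂.2 ⟨n, j, hj⟩
  exact measure_mono_null htrapped <| measure_iUnion_null fun n =>
    measure_iUnion_null fun j => (hqmp.iterate j).preimage_null (hnull n)

theorem stmt_18 {d : ℕ} (g : EuclideanSpace ℝ (Fin d) → EuclideanSpace ℝ (Fin d))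
    (hg : ContDiff ℝ 1 g)
    (hdet : ∀ x, (fderiv ℝ g x).det ≠ 0)
    (A : Set (EuclideanSpace ℝ (Fin d)))
    (hfix : ∀ a ∈ A, g a = a)
    (B : ℕ → Set (EuclideanSpace ℝ (Fin d)))
    (hBopen : ∀ n, IsOpen (B n))
    (hcover : A ⊆ ⋃ n, B n)
    (hnull : ∀ n, volume (⋂ k : ℕ, g^[k] ⁻¹' (B n)) = 0) :
    volume {x₀ | ∃ a ∈ A, Tendsto (fun k => g^[k] x₀) atTop (nhds a)} = 0 :=
  stmt_18_general g hg hdet A B hBopen hcover hnull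
end
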